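/- (Theorem 1, λ-H representation: uniqueness up to rigid motion.) Let U ⊆ ℝ² be a nonempty connected open set and let φ, ψ : ℝ² → ℝ³ be two conformal immersions on U with the same conformal factor λ. Let n_φ := (φ_u × φ_v)/‖φ_u × φ_v‖ and n_ψ := (ψ_u × ψ_v)/‖ψ_u × ψ_v‖ be their unit normals, and suppose that on all of U the mean curvatures agree, ⟨Δφ, n_φ⟩/(2λ²) = ⟨Δψ, n_ψ⟩/(2λ²), and the quantities μ agree, (∂_z φ_z, n_φ) = (∂_z ψ_z, n_ψ). Then ψ differs from φ by a rigid motion: there exist a rotation matrix A ∈ SO(3) and a vector b ∈ ℝ³ such that ψ(p) = A·φ(p) + b for all p ∈ U. -/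

import Mathlib

open Complex

noncomputable section

/-- Euclidean 3-space. -/
abbrev E3 : Type := EuclideanSpace ℝ (Fin 3)

/-- Partial derivative in the first (u) coordinate direction. -/
def pu {F : Type} [NormedAddCommGroup F] [NormedSpace ℝ F]
    (f : ℝ × ℝ → F) (p : ℝ × ℝ) : F := fderiv ℝ f p (1, 0)

/-- Partial derivative in the second (v) coordinate direction. -/
def pv {F : Type} [NormedAddCommGroup F] [NormedSpace ℝ F]
    (f : ℝ × ℝ → F) (p : ℝ × ℝ) : F := fderiv ℝ f p (0, 1)

/-- Cross product on ℝ³. -/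
def cross (a b : E3) : E3 :=
  (WithLp.equiv 2 (Fin 3 → ℝ)).symm
    ![a 1 * b 2 - a 2 * b 1, a 2 * b 0 - a 0 * b 2, a 0 * b 1 - a 1 * b 0]

/-- The Euclidean inner product on ℝ³. -/
def ip (a b : E3) : ℝ := @inner ℝ _ _ a b

/-- `φ` is a smooth conformal immersion on the open set `U ⊆ ℝ²` with
(smooth, positive) conformal factor `lam`:  ⟨φ_u,φ_u⟩ = λ², ⟨φ_v,φ_v⟩ = λ²,
⟨φ_u,φ_v⟩ = 0 at every point of `U`. -/
def IsConfImm (U : Set (ℝ × ℝ)) (φ : ℝ × ℝ → E3) (lam : ℝ × ℝ → ℝ) : Prop :=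
  IsOpen U ∧ ContDiffOn ℝ (⊤ : ℕ∞) φ U ∧ ContDiffOn ℝ (⊤ : ℕ∞) lam U ∧
    ∀ p ∈ U, 0 < lam p ∧
      ip (pu φ p) (pu φ p) = (lam p) ^ 2 ∧
      ip (pv φ p) (pv φ p) = (lam p) ^ 2 ∧
      ip (pu φ p) (pv φ p) = 0

/-- Complexification ℝ³ ↪ ℂ³. -/
def toC (x : E3) : Fin 3 → ℂ := fun j => (x j : ℂ)

/-- Complex-bilinear dot product on ℂ³:  (a,b) = Σⱼ aⱼ bⱼ. -/
def cdot (a b : Fin 3 → ℂ) : ℂ := ∑ j, a j * b j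

/-- ∂_z = ½(∂_u − i ∂_v) for maps into complex normed spaces. -/
def dz {F : Type} [NormedAddCommGroup F] [NormedSpace ℂ F]
    (f : ℝ × ℝ → F) (p : ℝ × ℝ) : F :=
  (2 : ℂ)⁻¹ • (pu f p - Complex.I • pv f p)

/-- ∂_z̄ = ½(∂_u + i ∂_v) for maps into complex normed spaces. -/
def dzbar {F : Type} [NormedAddCommGroup F] [NormedSpace ℂ F]
    (f : ℝ × ℝ → F) (p : ℝ × ℝ) : F :=
  (2 : ℂ)⁻¹ • (pu f p + Complex.I • pv f p)

/-- `f_z := ½(f_u − i f_v) ∈ ℂ³` for a real-vector-valued map `f` (in particular `φ_z`). -/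
def phiz (f : ℝ × ℝ → E3) (p : ℝ × ℝ) : Fin 3 → ℂ :=
  (2 : ℂ)⁻¹ • (toC (pu f p) - Complex.I • toC (pv f p))

/-- `f_z̄ := ½(f_u + i f_v) ∈ ℂ³` for a real-vector-valued map `f` (in particular `φ_z̄`). -/
def phizbar (f : ℝ × ℝ → E3) (p : ℝ × ℝ) : Fin 3 → ℂ :=
  (2 : ℂ)⁻¹ • (toC (pu f p) + Complex.I • toC (pv f p))

/-- The unit normal n = (φ_u × φ_v)/‖φ_u × φ_v‖. -/
def nvec (φ : ℝ × ℝ → E3) (p : ℝ × ℝ) : E3 :=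
  ‖cross (pu φ p) (pv φ p)‖⁻¹ • cross (pu φ p) (pv φ p)

/-- Componentwise Laplacian Δ = ∂_uu + ∂_vv. -/
def lap {F : Type} [NormedAddCommGroup F] [NormedSpace ℝ F]
    (f : ℝ × ℝ → F) (p : ℝ × ℝ) : F := pu (pu f) p + pv (pv f) p

/-- Mean curvature H = ⟨Δφ, n⟩/(2λ²). -/
def mcurv (φ : ℝ × ℝ → E3) (lam : ℝ × ℝ → ℝ) (p : ℝ × ℝ) : ℝ :=
  ip (lap φ p) (nvec φ p) / (2 * (lam p) ^ 2)

/-- μ := (∂_z φ_z, n). -/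
def muQ (φ : ℝ × ℝ → E3) (p : ℝ × ℝ) : ℂ :=
  cdot (dz (phiz φ) p) (toC (nvec φ p))


/-!
Attach to an immersion `φ` the frame `F_φ = (φ_u, φ_v, φ_u × φ_v)`. The Gram matrix `F_φᵀ F_φ`
and the matrices `F_φᵀ ∂F_φ` are determined by the first fundamental form, its first derivatives
(through the symmetry of second derivatives) and the second fundamental form `(e, f, g)`.
Conformality with the same factor `λ` gives `φ` and `ψ` the same first fundamental form, and
`H = (e + g) / (2λ²)` together with `μ = (e - g) / 4 - i f / 2` determines `e, f, g`. Hence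
`F_φ⁻¹ ∂F_φ = F_ψ⁻¹ ∂F_ψ`, so `∂(F_ψ F_φ⁻¹) = 0` and `F_ψ = A F_φ` on the connected set `U`
for a constant matrix `A`. It is orthogonal because the Gram matrices agree and has determinant
one because `det F = ‖φ_u × φ_v‖² > 0` for both frames. Finally `ψ - Aφ` has vanishing
derivative, so it is a constant `b`.
-/

open Matrix

lemma ip_comm (a b : E3) : ip a b = ip b a := real_inner_comm b a

lemma ip_eq_dotProduct (a b : E3) : ip a b = a.ofLp ⬝ᵥ b.ofLp := by
  simp [ip, EuclideanSpace.inner_eq_star_dotProduct, dotProduct_comm]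

lemma ofLp_cross (a b : E3) : (cross a b).ofLp = a.ofLp ⨯₃ b.ofLp := by
  simp [cross, cross_apply]

lemma ip_cross_left (a b : E3) : ip (cross a b) a = 0 := by
  rw [ip_eq_dotProduct, ofLp_cross, dotProduct_comm, dot_self_cross]

lemma ip_cross_right (a b : E3) : ip (cross a b) b = 0 := by
  rw [ip_eq_dotProduct, ofLp_cross, dotProduct_comm, dot_cross_self]

lemma ip_cross_self (a b : E3) :
    ip (cross a b) (cross a b) = ip a a * ip b b - ip a b ^ 2 := by
  simp only [ip_eq_dotProduct, ofLp_cross, cross_dot_cross]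
  rw [dotProduct_comm b.ofLp a.ofLp]
  ring

lemma DifferentiableAt.cross {E : Type*} [NormedAddCommGroup E] [NormedSpace ℝ E]
    {f g : E → E3} {p : E} (hf : DifferentiableAt ℝ f p) (hg : DifferentiableAt ℝ g p) :
    DifferentiableAt ℝ (fun q => cross (f q) (g q)) p := by
  have hf' := differentiableAt_euclidean.1 hf
  have hg' := differentiableAt_euclidean.1 hg
  refine differentiableAt_euclidean.2 fun i => ?_
  fin_cases i <;>
    simp only [_root_.cross, WithLp.equiv_symm_apply, Fin.isValue, Fin.zero_eta, Fin.mk_one,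
      Fin.reduceFinMk, cons_val_zero, cons_val_one, cons_val] <;>
    fun_prop

def colMatrix {ι n : Type*} (v : ι → EuclideanSpace ℝ n) : Matrix n ι ℝ :=
  Matrix.of fun i k => v k i

def colMatrixLinearMap {ι n : Type*} : (ι → EuclideanSpace ℝ n) →ₗ[ℝ] Matrix n ι ℝ where
  toFun := colMatrix
  map_add' _ _ := rfl
  map_smul' _ _ := rfl

lemma colMatrix_transpose_mul {ι κ n : Type*} [Fintype n] (v : ι → EuclideanSpace ℝ n)
    (w : κ → EuclideanSpace ℝ n) :
    (colMatrix v)ᵀ * colMatrix w = Matrix.of fun j k => inner ℝ (v j) (w k) := by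
  ext j k
  simp [colMatrix, Matrix.mul_apply, PiLp.inner_apply, mul_comm]

lemma det_colMatrix_cross (a b : E3) :
    (colMatrix ![a, b, cross a b]).det = ip (cross a b) (cross a b) := by
  have h : (colMatrix ![a, b, cross a b])ᵀ = ![a.ofLp, b.ofLp, (cross a b).ofLp] := by
    ext i k
    fin_cases i <;> rfl
  rw [← det_transpose, h, ← triple_product_eq_det, triple_product_permutation,
    triple_product_permutation, ip_eq_dotProduct, ofLp_cross]

lemma Matrix.eq_of_add_transpose_eq_of_lower {n R : Type*} [LinearOrder n] [Field R] [CharZero R]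
    {P Q : Matrix n n R} (hsym : P + Pᵀ = Q + Qᵀ) (hlow : ∀ i j, j < i → P i j = Q i j) :
    P = Q := by
  ext i j
  have hij := congrFun₂ hsym i j
  simp only [Matrix.add_apply, Matrix.transpose_apply] at hij
  rcases lt_trichotomy i j with h | rfl | h
  · linear_combination hij - hlow j i h
  · linear_combination hij / 2
  · exact hlow i j h

lemma Matrix.inv_mul_eq_of_transpose_mul_eq {n R : Type*} [Fintype n] [DecidableEq n]
    [CommRing R] {F G F' G' : Matrix n n R} (hF : IsUnit F.det) (hG : IsUnit G.det)
    (hgram : Fᵀ * F = Gᵀ * G) (h : Fᵀ * F' = Gᵀ * G') : F⁻¹ * F' = G⁻¹ * G' := by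
  have inv_eq (X : Matrix n n R) (hX : IsUnit X.det) : X⁻¹ = (Xᵀ * X)⁻¹ * Xᵀ := by
    rw [Matrix.mul_inv_rev, Matrix.mul_assoc,
      Matrix.nonsing_inv_mul _ (by rwa [Matrix.det_transpose]), Matrix.mul_one]
  rw [inv_eq F hF, inv_eq G hG, Matrix.mul_assoc, Matrix.mul_assoc, hgram, h]

theorem fderiv_mul_ringInverse_apply_eq_zero {𝕜 E R : Type*} [NontriviallyNormedField 𝕜]
    [NormedAddCommGroup E] [NormedSpace 𝕜 E] [NormedRing R] [NormedAlgebra 𝕜 R]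
    [HasSummableGeomSeries R] {F G : E → R} {p w : E}
    (hF : DifferentiableAt 𝕜 F p) (hG : DifferentiableAt 𝕜 G p)
    (hFp : IsUnit (F p)) (hGp : IsUnit (G p))
    (h : Ring.inverse (F p) * fderiv 𝕜 F p w = Ring.inverse (G p) * fderiv 𝕜 G p w) :
    fderiv 𝕜 (fun q => G q * Ring.inverse (F q)) p w = 0 := by
  obtain ⟨u, hu⟩ := hFp
  have hinv : HasFDerivAt (fun q => Ring.inverse (F q))
      ((-ContinuousLinearMap.mulLeftRight 𝕜 R ↑u⁻¹ ↑u⁻¹).comp (fderiv 𝕜 F p)) p :=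
    (hu ▸ hasFDerivAt_ringInverse u).comp p hF.hasFDerivAt
  rw [← hu, Ring.inverse_unit] at h
  rw [(hG.hasFDerivAt.fun_mul' hinv).fderiv]
  simp only [ContinuousLinearMap.neg_comp, smul_neg, ← hu, _root_.add_apply, _root_.neg_apply,
    _root_.smul_apply, ContinuousLinearMap.comp_apply, ContinuousLinearMap.mulLeftRight_apply,
    smul_eq_mul, ← mul_assoc, MulOpposite.smul_eq_mul_unop, MulOpposite.unop_op,
    Ring.inverse_unit]
  rw [mul_assoc (G p), h, ← mul_assoc, Ring.mul_inverse_cancel _ hGp, one_mul, neg_add_cancel]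

lemma ContinuousLinearMap.ext_prod_real {F : Type*} [NormedAddCommGroup F] [NormedSpace ℝ F]
    {L M : ℝ × ℝ →L[ℝ] F} (h₁ : L (1, 0) = M (1, 0)) (h₂ : L (0, 1) = M (0, 1)) : L = M := by
  refine ContinuousLinearMap.prod_ext ?_ ?_ <;> ext <;> simpa

section PartialDerivatives

variable {F : Type} [NormedAddCommGroup F] [NormedSpace ℝ F] {f : ℝ × ℝ → F} {p : ℝ × ℝ}

lemma hasFDerivAt_fderiv_apply (hf : ContDiffAt ℝ 2 f p) (w : ℝ × ℝ) :
    HasFDerivAt (fun q => fderiv ℝ f q w)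
      ((ContinuousLinearMap.apply ℝ F w).comp (fderiv ℝ (fderiv ℝ f) p)) p :=
  (ContinuousLinearMap.apply ℝ F w).hasFDerivAt.comp p
    ((hf.fderiv_right (m := 1) (by norm_num)).differentiableAt one_ne_zero).hasFDerivAt

lemma differentiableAt_pu (hf : ContDiffAt ℝ 2 f p) : DifferentiableAt ℝ (pu f) p :=
  (hasFDerivAt_fderiv_apply hf _).differentiableAt

lemma differentiableAt_pv (hf : ContDiffAt ℝ 2 f p) : DifferentiableAt ℝ (pv f) p :=
  (hasFDerivAt_fderiv_apply hf _).differentiableAt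

lemma pu_pv_comm (hf : ContDiffAt ℝ 2 f p) : pu (pv f) p = pv (pu f) p := by
  change fderiv ℝ (fun q => fderiv ℝ f q (0, 1)) p (1, 0) =
    fderiv ℝ (fun q => fderiv ℝ f q (1, 0)) p (0, 1)
  rw [(hasFDerivAt_fderiv_apply hf _).fderiv, (hasFDerivAt_fderiv_apply hf _).fderiv]
  exact hf.isSymmSndFDerivAt (by simp) _ _

lemma fderiv_eq_of_eqOn {U : Set (ℝ × ℝ)} (hU : IsOpen U) {g : ℝ × ℝ → F} (hfg : U.EqOn f g)
    (hp : p ∈ U) : fderiv ℝ f p = fderiv ℝ g p :=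
  (hfg.eventuallyEq_of_mem (hU.mem_nhds hp)).fderiv_eq

end PartialDerivatives

lemma exists_eq_map_add_of_pu_pv_eq {F G : Type} [NormedAddCommGroup F] [NormedSpace ℝ F]
    [NormedAddCommGroup G] [NormedSpace ℝ G] {U : Set (ℝ × ℝ)} (hU : IsOpen U)
    (hUc : IsPreconnected U) {φ : ℝ × ℝ → F} {ψ : ℝ × ℝ → G} (hφ : DifferentiableOn ℝ φ U)
    (hψ : DifferentiableOn ℝ ψ U) (A : F →L[ℝ] G)
    (h : ∀ q ∈ U, pu ψ q = A (pu φ q) ∧ pv ψ q = A (pv φ q)) :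
    ∃ b : G, ∀ q ∈ U, ψ q = A (φ q) + b := by
  rcases U.eq_empty_or_nonempty with rfl | ⟨p₀, hp₀⟩
  · exact ⟨0, by simp⟩
  refine ⟨ψ p₀ - A (φ p₀), fun q hq => (sub_eq_iff_eq_add').1 ?_⟩
  refine hU.is_const_of_fderiv_eq_zero (𝕜 := ℝ) (f := fun q => ψ q - A (φ q)) hUc
    (hψ.sub (A.differentiable.comp_differentiableOn hφ)) (fun q hq => ?_) hq hp₀
  have hderiv := ((hψ q hq).differentiableAt (hU.mem_nhds hq)).hasFDerivAt.sub
    (A.hasFDerivAt.comp q ((hφ q hq).differentiableAt (hU.mem_nhds hq)).hasFDerivAt)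
  rw [Pi.zero_apply, show (fun q => ψ q - A (φ q)) = ψ - A ∘ φ from rfl, hderiv.fderiv]
  refine ContinuousLinearMap.ext_prod_real ?_ ?_
  · simpa [sub_eq_zero, pu] using (h q hq).1
  · simpa [sub_eq_zero, pv] using (h q hq).2

def frameVec (φ : ℝ × ℝ → E3) (q : ℝ × ℝ) : Fin 3 → E3 :=
  ![pu φ q, pv φ q, cross (pu φ q) (pv φ q)]

def frame (φ : ℝ × ℝ → E3) (q : ℝ × ℝ) : Matrix (Fin 3) (Fin 3) ℝ := colMatrix (frameVec φ q)

def firstFundamentalForm (φ : ℝ × ℝ → E3) (p : ℝ × ℝ) : ℝ × ℝ × ℝ :=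
  (ip (pu φ p) (pu φ p), ip (pu φ p) (pv φ p), ip (pv φ p) (pv φ p))

def secondFundamentalForm (φ : ℝ × ℝ → E3) (p : ℝ × ℝ) : ℝ × ℝ × ℝ :=
  (ip (pu (pu φ) p) (nvec φ p), ip (pu (pv φ) p) (nvec φ p), ip (pv (pv φ) p) (nvec φ p))

def connection (φ : ℝ × ℝ → E3) (p w : ℝ × ℝ) : Matrix (Fin 3) (Fin 3) ℝ :=
  Matrix.of fun j k => ip (frameVec φ p j) (fderiv ℝ (fun q => frameVec φ q k) p w)

section Frame

variable {U : Set (ℝ × ℝ)} {φ ψ : ℝ × ℝ → E3} {p : ℝ × ℝ}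

lemma ip_cross_eq_norm_mul_ip_nvec (φ : ℝ × ℝ → E3) (p : ℝ × ℝ) (a : E3) :
    ip (cross (pu φ p) (pv φ p)) a = ‖cross (pu φ p) (pv φ p)‖ * ip a (nvec φ p) := by
  rcases eq_or_ne ‖cross (pu φ p) (pv φ p)‖ 0 with h | h
  · simp [norm_eq_zero.1 h, ip]
  · simp [nvec, ip, inner_smul_right, real_inner_comm, h]

lemma ip_frameVec_eq (h : firstFundamentalForm φ p = firstFundamentalForm ψ p) (j k : Fin 3) :
    ip (frameVec φ p j) (frameVec φ p k) = ip (frameVec ψ p j) (frameVec ψ p k) := by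
  simp only [firstFundamentalForm, Prod.mk.injEq] at h
  obtain ⟨hE, hF, hG⟩ := h
  fin_cases j <;> fin_cases k <;>
    simp [frameVec, ip_cross_left, ip_cross_right, ip_cross_self, ip_comm _ (cross _ _), hE, hF,
      hG, ip_comm (pv φ p), ip_comm (pv ψ p)]

lemma norm_cross_eq (h : firstFundamentalForm φ p = firstFundamentalForm ψ p) :
    ‖cross (pu φ p) (pv φ p)‖ = ‖cross (pu ψ p) (pv ψ p)‖ := by
  have h22 := ip_frameVec_eq h 2 2
  simp only [frameVec, ip, real_inner_self_eq_norm_sq] at h22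
  exact (sq_eq_sq₀ (norm_nonneg _) (norm_nonneg _)).1 h22

lemma frame_transpose_mul_self_eq (h : firstFundamentalForm φ p = firstFundamentalForm ψ p) :
    (frame φ p)ᵀ * frame φ p = (frame ψ p)ᵀ * frame ψ p := by
  rw [frame, frame, colMatrix_transpose_mul, colMatrix_transpose_mul]
  ext j k
  exact ip_frameVec_eq h j k

lemma isUnit_det_frame (h : cross (pu φ p) (pv φ p) ≠ 0) : IsUnit (frame φ p).det := by
  rw [frame, frameVec, det_colMatrix_cross, isUnit_iff_ne_zero, ip]
  exact inner_self_ne_zero.2 h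

lemma differentiableAt_frameVec (hφ : ContDiffAt ℝ 2 φ p) (k : Fin 3) :
    DifferentiableAt ℝ (fun q => frameVec φ q k) p := by
  fin_cases k
  · exact differentiableAt_pu hφ
  · exact differentiableAt_pv hφ
  · exact (differentiableAt_pu hφ).cross (differentiableAt_pv hφ)

lemma connection_add_transpose (hφ : ContDiffAt ℝ 2 φ p) (w : ℝ × ℝ) :
    connection φ p w + (connection φ p w)ᵀ =
      Matrix.of fun j k => fderiv ℝ (fun q => ip (frameVec φ q j) (frameVec φ q k)) p w := by
  ext j k
  simp only [ip, connection, Matrix.add_apply, Matrix.transpose_apply, Matrix.of_apply]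
  rw [fderiv_inner_apply ℝ (differentiableAt_frameVec hφ j) (differentiableAt_frameVec hφ k),
    real_inner_comm (frameVec φ p k)]

lemma connection_pu_lower (hφ : ContDiffAt ℝ 2 φ p) :
    connection φ p (1, 0) 1 0 = pu (fun q => (firstFundamentalForm φ q).2.1) p -
        pv (fun q => (firstFundamentalForm φ q).1) p / 2 ∧
      connection φ p (1, 0) 2 0 = ‖cross (pu φ p) (pv φ p)‖ * (secondFundamentalForm φ p).1 ∧
      connection φ p (1, 0) 2 1 = ‖cross (pu φ p) (pv φ p)‖ * (secondFundamentalForm φ p).2.1 := by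
  have hu := differentiableAt_pu hφ
  refine ⟨?_, ip_cross_eq_norm_mul_ip_nvec φ p _, ip_cross_eq_norm_mul_ip_nvec φ p _⟩
  have hF := fderiv_inner_apply ℝ hu (differentiableAt_pv hφ) (1, 0)
  have hE := fderiv_inner_apply ℝ hu hu (0, 1)
  change ip (pv φ p) (pu (pu φ) p) = fderiv ℝ (fun q => ip (pu φ q) (pv φ q)) p (1, 0) -
    fderiv ℝ (fun q => ip (pu φ q) (pu φ q)) p (0, 1) / 2
  simp only [ip] at hF hE ⊢
  rw [hF, hE]
  change _ = inner ℝ (pu φ p) (pu (pv φ) p) + inner ℝ (pu (pu φ) p) (pv φ p) -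
    (inner ℝ (pu φ p) (pv (pu φ) p) + inner ℝ (pv (pu φ) p) (pu φ p)) / 2
  rw [pu_pv_comm hφ, real_inner_comm (pv φ p), real_inner_comm (pu φ p) (pv (pu φ) p)]
  ring

lemma connection_pv_lower (hφ : ContDiffAt ℝ 2 φ p) :
    connection φ p (0, 1) 1 0 = pu (fun q => (firstFundamentalForm φ q).2.2) p / 2 ∧
      connection φ p (0, 1) 2 0 = ‖cross (pu φ p) (pv φ p)‖ * (secondFundamentalForm φ p).2.1 ∧
      connection φ p (0, 1) 2 1 = ‖cross (pu φ p) (pv φ p)‖ * (secondFundamentalForm φ p).2.2 := by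
  have hv := differentiableAt_pv hφ
  have hG := fderiv_inner_apply ℝ hv hv (1, 0)
  refine ⟨?_, ?_, ip_cross_eq_norm_mul_ip_nvec φ p _⟩
  · change ip (pv φ p) (pv (pu φ) p) = fderiv ℝ (fun q => ip (pv φ q) (pv φ q)) p (1, 0) / 2
    simp only [ip] at hG ⊢
    rw [hG]
    change _ = (inner ℝ (pv φ p) (pu (pv φ) p) + inner ℝ (pu (pv φ) p) (pv φ p)) / 2
    rw [pu_pv_comm hφ, real_inner_comm (pv φ p) (pv (pu φ) p)]
    ring
  · change ip _ (pv (pu φ) p) = _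
    rw [← pu_pv_comm hφ]
    exact ip_cross_eq_norm_mul_ip_nvec φ p _

/-- The symmetric part of a connection matrix is the derivative of the Gram matrix of the frame,
and its lower triangle is given by `connection_pu_lower` and `connection_pv_lower`. -/
lemma connection_eq (hU : IsOpen U) (hp : p ∈ U) (hφ : ContDiffAt ℝ 2 φ p)
    (hψ : ContDiffAt ℝ 2 ψ p) (hI : U.EqOn (firstFundamentalForm φ) (firstFundamentalForm ψ))
    (hII : secondFundamentalForm φ p = secondFundamentalForm ψ p) :
    connection φ p (1, 0) = connection ψ p (1, 0) ∧
      connection φ p (0, 1) = connection ψ p (0, 1) := by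
  have hsym (w : ℝ × ℝ) :
      connection φ p w + (connection φ p w)ᵀ = connection ψ p w + (connection ψ p w)ᵀ := by
    rw [connection_add_transpose hφ, connection_add_transpose hψ]
    ext j k
    simp only [Matrix.of_apply]
    rw [fderiv_eq_of_eqOn hU (fun q hq => ip_frameVec_eq (hI hq) j k) hp]
  have hd (g : ℝ × ℝ × ℝ → ℝ) (w : ℝ × ℝ) :
      fderiv ℝ (fun q => g (firstFundamentalForm φ q)) p w =
        fderiv ℝ (fun q => g (firstFundamentalForm ψ q)) p w := by
    rw [fderiv_eq_of_eqOn hU (fun q hq => congrArg g (hI hq)) hp]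
  have hEv : pv (fun q => (firstFundamentalForm φ q).1) p =
      pv (fun q => (firstFundamentalForm ψ q).1) p := hd _ _
  have hFu : pu (fun q => (firstFundamentalForm φ q).2.1) p =
      pu (fun q => (firstFundamentalForm ψ q).2.1) p := hd (·.2.1) _
  have hGu : pu (fun q => (firstFundamentalForm φ q).2.2) p =
      pu (fun q => (firstFundamentalForm ψ q).2.2) p := hd (·.2.2) _
  have hN := norm_cross_eq (hI hp)
  obtain ⟨hφu₁, hφu₂, hφu₃⟩ := connection_pu_lower hφ
  obtain ⟨hψu₁, hψu₂, hψu₃⟩ := connection_pu_lower hψ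
  obtain ⟨hφv₁, hφv₂, hφv₃⟩ := connection_pv_lower hφ
  obtain ⟨hψv₁, hψv₂, hψv₃⟩ := connection_pv_lower hψ
  constructor <;> refine Matrix.eq_of_add_transpose_eq_of_lower (hsym _) fun i j hij => ?_ <;>
    fin_cases i <;> fin_cases j <;> simp at hij
  all_goals simp [hφu₁, hφu₂, hφu₃, hψu₁, hψu₂, hψu₃, hφv₁, hφv₂, hφv₃, hψv₁, hψv₂, hψv₃,
    hN, hII, hEv, hFu, hGu]

lemma frameVec_eq_of_frame_eq {A : Matrix (Fin 3) (Fin 3) ℝ} (h : frame ψ p = A * frame φ p)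
    (k : Fin 3) : frameVec ψ p k = Matrix.toEuclideanCLM (𝕜 := ℝ) A (frameVec φ p k) := by
  ext i
  simpa [frame, colMatrix, Matrix.mul_apply, Matrix.mulVec, dotProduct] using congrFun₂ h i k

end Frame

section FrameCalculus

-- Any norm on matrices would do: it is only used to differentiate matrix-valued maps.
attribute [local instance] Matrix.linftyOpNormedRing Matrix.linftyOpNormedAlgebra

variable {U : Set (ℝ × ℝ)} {φ ψ : ℝ × ℝ → E3} {p p₀ : ℝ × ℝ}

lemma hasFDerivAt_frame (hφ : ContDiffAt ℝ 2 φ p) :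
    HasFDerivAt (frame φ) (LinearMap.toContinuousLinearMap colMatrixLinearMap ∘L
      ContinuousLinearMap.pi fun k => fderiv ℝ (fun q => frameVec φ q k) p) p :=
  (LinearMap.toContinuousLinearMap colMatrixLinearMap).hasFDerivAt.comp p
    (hasFDerivAt_pi.2 fun k => (differentiableAt_frameVec hφ k).hasFDerivAt)

lemma fderiv_frame_apply (hφ : ContDiffAt ℝ 2 φ p) (w : ℝ × ℝ) :
    fderiv ℝ (frame φ) p w = colMatrix fun k => fderiv ℝ (fun q => frameVec φ q k) p w := by
  rw [(hasFDerivAt_frame hφ).fderiv]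
  rfl

lemma fderiv_frame_mul_inverse_frame_apply_eq_zero (hφ : ContDiffAt ℝ 2 φ p)
    (hψ : ContDiffAt ℝ 2 ψ p) (hφu : IsUnit (frame φ p).det) (hψu : IsUnit (frame ψ p).det)
    (hI : firstFundamentalForm φ p = firstFundamentalForm ψ p) {w : ℝ × ℝ}
    (hw : connection φ p w = connection ψ p w) :
    fderiv ℝ (fun q => frame ψ q * Ring.inverse (frame φ q)) p w = 0 := by
  refine fderiv_mul_ringInverse_apply_eq_zero (hasFDerivAt_frame hφ).differentiableAt
    (hasFDerivAt_frame hψ).differentiableAt ((Matrix.isUnit_iff_isUnit_det _).2 hφu)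
    ((Matrix.isUnit_iff_isUnit_det _).2 hψu) ?_
  rw [← Matrix.nonsing_inv_eq_ringInverse, ← Matrix.nonsing_inv_eq_ringInverse]
  refine Matrix.inv_mul_eq_of_transpose_mul_eq hφu hψu (frame_transpose_mul_self_eq hI) ?_
  calc _ = (frame φ p)ᵀ * colMatrix fun k => fderiv ℝ (fun q => frameVec φ q k) p w :=
        congrArg _ (fderiv_frame_apply hφ w)
    _ = connection φ p w := colMatrix_transpose_mul _ _
    _ = connection ψ p w := hw
    _ = (frame ψ p)ᵀ * colMatrix fun k => fderiv ℝ (fun q => frameVec ψ q k) p w :=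
        (colMatrix_transpose_mul _ _).symm
    _ = _ := congrArg _ (fderiv_frame_apply hψ w).symm

lemma exists_frame_eq_mul_frame (hU : IsOpen U) (hUc : IsPreconnected U) (hp₀ : p₀ ∈ U)
    (hφ : ContDiffOn ℝ 2 φ U) (hψ : ContDiffOn ℝ 2 ψ U)
    (himm : ∀ q ∈ U, cross (pu φ q) (pv φ q) ≠ 0)
    (hI : U.EqOn (firstFundamentalForm φ) (firstFundamentalForm ψ))
    (hII : U.EqOn (secondFundamentalForm φ) (secondFundamentalForm ψ)) :
    ∃ A : Matrix (Fin 3) (Fin 3) ℝ, ∀ q ∈ U, frame ψ q = A * frame φ q := by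
  have hφ' q (hq : q ∈ U) : ContDiffAt ℝ 2 φ q := hφ.contDiffAt (hU.mem_nhds hq)
  have hψ' q (hq : q ∈ U) : ContDiffAt ℝ 2 ψ q := hψ.contDiffAt (hU.mem_nhds hq)
  have hunitφ q (hq : q ∈ U) : IsUnit (frame φ q).det := isUnit_det_frame (himm q hq)
  have hunitψ q (hq : q ∈ U) : IsUnit (frame ψ q).det := by
    refine isUnit_det_frame fun h => himm q hq (norm_eq_zero.1 ?_)
    rw [norm_cross_eq (hI hq), h, norm_zero]
  have hconst : ∀ q ∈ U, frame ψ q * (frame φ q)⁻¹ = frame ψ p₀ * (frame φ p₀)⁻¹ := by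
    intro q hq
    simp only [Matrix.nonsing_inv_eq_ringInverse]
    refine hU.is_const_of_fderiv_eq_zero (𝕜 := ℝ)
      (f := fun q => frame ψ q * Ring.inverse (frame φ q)) hUc (fun q hq => ?_) (fun q hq => ?_)
      hq hp₀
    · exact ((hasFDerivAt_frame (hψ' q hq)).differentiableAt.mul
        ((hasFDerivAt_frame (hφ' q hq)).differentiableAt.inverse
          ((Matrix.isUnit_iff_isUnit_det _).2 (hunitφ q hq)))).differentiableWithinAt
    · have hconn := connection_eq hU hq (hφ' q hq) (hψ' q hq) hI (hII hq)
      exact ContinuousLinearMap.ext_prod_real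
        (fderiv_frame_mul_inverse_frame_apply_eq_zero (hφ' q hq) (hψ' q hq) (hunitφ q hq)
          (hunitψ q hq) (hI hq) hconn.1)
        (fderiv_frame_mul_inverse_frame_apply_eq_zero (hφ' q hq) (hψ' q hq) (hunitφ q hq)
          (hunitψ q hq) (hI hq) hconn.2)
  exact ⟨frame ψ p₀ * (frame φ p₀)⁻¹, fun q hq => by
    rw [← hconst q hq, Matrix.nonsing_inv_mul_cancel_right _ _ (hunitφ q hq)]⟩

end FrameCalculus

theorem exists_rigid_motion_of_fundamentalForm_eq {U : Set (ℝ × ℝ)} {φ ψ : ℝ × ℝ → E3}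
    (hU : IsOpen U) (hUc : IsConnected U) (hφ : ContDiffOn ℝ 2 φ U) (hψ : ContDiffOn ℝ 2 ψ U)
    (himm : ∀ q ∈ U, cross (pu φ q) (pv φ q) ≠ 0)
    (hI : U.EqOn (firstFundamentalForm φ) (firstFundamentalForm ψ))
    (hII : U.EqOn (secondFundamentalForm φ) (secondFundamentalForm ψ)) :
    ∃ A : Matrix (Fin 3) (Fin 3) ℝ, Aᵀ * A = 1 ∧ A.det = 1 ∧
      ∃ b : E3, ∀ q ∈ U, ψ q = Matrix.toEuclideanCLM (𝕜 := ℝ) A (φ q) + b := by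
  obtain ⟨p₀, hp₀⟩ := hUc.nonempty
  obtain ⟨A, hA⟩ := exists_frame_eq_mul_frame hU hUc.isPreconnected hp₀ hφ hψ himm hI hII
  have hdet := isUnit_det_frame (himm p₀ hp₀)
  have hunit := (Matrix.isUnit_iff_isUnit_det _).2 hdet
  have hunitT := (Matrix.isUnit_iff_isUnit_det _).2 ((det_transpose (frame φ p₀)).symm ▸ hdet)
  refine ⟨A, ?_, ?_, ?_⟩
  · have h := frame_transpose_mul_self_eq (hI hp₀)
    rw [hA p₀ hp₀, Matrix.transpose_mul] at h
    have h' : (frame φ p₀)ᵀ * (Aᵀ * A) * frame φ p₀ = (frame φ p₀)ᵀ * 1 * frame φ p₀ := by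
      simpa [Matrix.mul_assoc] using h.symm
    exact hunitT.mul_left_cancel (hunit.mul_right_cancel h')
  · have h : (frame ψ p₀).det = (frame φ p₀).det := by
      rw [frame, frame, frameVec, frameVec, det_colMatrix_cross, det_colMatrix_cross]
      exact (ip_frameVec_eq (hI hp₀) 2 2).symm
    rw [hA p₀ hp₀, Matrix.det_mul] at h
    exact hdet.mul_eq_right.1 h
  · refine exists_eq_map_add_of_pu_pv_eq hU hUc.isPreconnected (hφ.differentiableOn two_ne_zero)
      (hψ.differentiableOn two_ne_zero) _ fun q hq => ?_
    exact ⟨frameVec_eq_of_frame_eq (hA q hq) 0, frameVec_eq_of_frame_eq (hA q hq) 1⟩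

def toCLM : E3 →L[ℝ] (Fin 3 → ℂ) :=
  ContinuousLinearMap.pi fun j => Complex.ofRealCLM.comp (EuclideanSpace.proj j)

lemma toC_dotProduct_toC (a b : E3) : toC a ⬝ᵥ toC b = (ip a b : ℂ) := by
  simp [dotProduct, toC, ip, PiLp.inner_apply, mul_comm]

section Conformal

variable {U : Set (ℝ × ℝ)} {φ ψ : ℝ × ℝ → E3} {lam : ℝ × ℝ → ℝ} {p : ℝ × ℝ}

lemma IsConfImm.contDiffOn (hφ : IsConfImm U φ lam) : ContDiffOn ℝ 2 φ U :=
  hφ.2.1.of_le (by norm_cast)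

lemma firstFundamentalForm_of_isConfImm (hφ : IsConfImm U φ lam) (hp : p ∈ U) :
    firstFundamentalForm φ p = (lam p ^ 2, 0, lam p ^ 2) := by
  obtain ⟨-, hE, hG, hF⟩ := hφ.2.2.2 p hp
  simp [firstFundamentalForm, hE, hF, hG]

lemma cross_ne_zero_of_isConfImm (hφ : IsConfImm U φ lam) (hp : p ∈ U) :
    cross (pu φ p) (pv φ p) ≠ 0 := by
  obtain ⟨hlam, hE, hG, hF⟩ := hφ.2.2.2 p hp
  intro h
  have := ip_cross_self (pu φ p) (pv φ p)
  rw [h, hE, hG, hF, ip, inner_zero_left] at this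
  nlinarith [pow_pos hlam 4]

lemma mcurv_eq (φ : ℝ × ℝ → E3) (lam : ℝ × ℝ → ℝ) (p : ℝ × ℝ) :
    mcurv φ lam p =
      ((secondFundamentalForm φ p).1 + (secondFundamentalForm φ p).2.2) / (2 * lam p ^ 2) := by
  simp [mcurv, secondFundamentalForm, lap, ip, inner_add_left]

lemma fderiv_phiz_apply (hφ : ContDiffAt ℝ 2 φ p) (w : ℝ × ℝ) :
    fderiv ℝ (phiz φ) p w =
      (2 : ℂ)⁻¹ • (toC (fderiv ℝ (pu φ) p w) - I • toC (fderiv ℝ (pv φ) p w)) := by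
  have hderiv := (((toCLM.hasFDerivAt.comp p (differentiableAt_pu hφ).hasFDerivAt).sub
    ((toCLM.hasFDerivAt.comp p (differentiableAt_pv hφ).hasFDerivAt).const_smul I)).const_smul
      (2 : ℂ)⁻¹)
  rw [show phiz φ = (2 : ℂ)⁻¹ • (toCLM ∘ pu φ - I • toCLM ∘ pv φ) from rfl, hderiv.fderiv]
  rfl

lemma muQ_eq (hφ : ContDiffAt ℝ 2 φ p) :
    muQ φ p = (((secondFundamentalForm φ p).1 - (secondFundamentalForm φ p).2.2) / 4 : ℝ) -
      ((secondFundamentalForm φ p).2.1 / 2 : ℝ) * I := by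
  have hu : pu (phiz φ) p = (2 : ℂ)⁻¹ • (toC (pu (pu φ) p) - I • toC (pu (pv φ) p)) :=
    fderiv_phiz_apply hφ (1, 0)
  have hv : pv (phiz φ) p = (2 : ℂ)⁻¹ • (toC (pv (pu φ) p) - I • toC (pv (pv φ) p)) :=
    fderiv_phiz_apply hφ (0, 1)
  rw [muQ, dz, hu, hv, ← pu_pv_comm hφ, show cdot = dotProduct from rfl]
  simp only [sub_dotProduct, smul_dotProduct, toC_dotProduct_toC, secondFundamentalForm,
    smul_eq_mul]
  push_cast
  ring_nf
  rw [I_sq]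
  ring

lemma secondFundamentalForm_eq_of_mcurv_eq_of_muQ_eq (hlam : lam p ≠ 0)
    (hφ : ContDiffAt ℝ 2 φ p) (hψ : ContDiffAt ℝ 2 ψ p)
    (hH : mcurv φ lam p = mcurv ψ lam p) (hmu : muQ φ p = muQ ψ p) :
    secondFundamentalForm φ p = secondFundamentalForm ψ p := by
  rw [mcurv_eq, mcurv_eq, div_left_inj' (by positivity)] at hH
  rw [muQ_eq hφ, muQ_eq hψ] at hmu
  have hre := congrArg re hmu
  have him := congrArg im hmu
  simp only [sub_re, sub_im, ofReal_re, ofReal_im, mul_re, mul_im, I_re, I_im] at hre him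
  refine Prod.ext ?_ (Prod.ext ?_ ?_) <;> linarith

end Conformal

/-- Theorem 1, λ-H representation: uniqueness up to rigid motion:
two conformal immersions on a nonempty connected open set with the same conformal
factor, the same mean curvature and the same μ differ by a rigid motion
ψ = A φ + b with A ∈ SO(3). -/
theorem lambdaH_representation_uniqueness_up_to_rigid_motion
    (U : Set (ℝ × ℝ)) (hU : IsConnected U)
    (φ ψ : ℝ × ℝ → E3) (lam : ℝ × ℝ → ℝ)
    (hφ : IsConfImm U φ lam) (hψ : IsConfImm U ψ lam)
    (hH : ∀ p ∈ U, mcurv φ lam p = mcurv ψ lam p)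
    (hmu : ∀ p ∈ U, muQ φ p = muQ ψ p) :
    ∃ A : Matrix (Fin 3) (Fin 3) ℝ,
      A.transpose * A = 1 ∧ A.det = 1 ∧
        ∃ b : E3, ∀ p ∈ U, ∀ i, ψ p i = (∑ j, A i j * φ p j) + b i := by
  have hUo : IsOpen U := hφ.1
  have hI : U.EqOn (firstFundamentalForm φ) (firstFundamentalForm ψ) := fun q hq => by
    rw [firstFundamentalForm_of_isConfImm hφ hq, firstFundamentalForm_of_isConfImm hψ hq]
  have hII : U.EqOn (secondFundamentalForm φ) (secondFundamentalForm ψ) := fun q hq =>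
    secondFundamentalForm_eq_of_mcurv_eq_of_muQ_eq (hφ.2.2.2 q hq).1.ne'
      (hφ.contDiffOn.contDiffAt (hUo.mem_nhds hq)) (hψ.contDiffOn.contDiffAt (hUo.mem_nhds hq))
      (hH q hq) (hmu q hq)
  obtain ⟨A, hA, hdet, b, hb⟩ := exists_rigid_motion_of_fundamentalForm_eq hUo hU
    hφ.contDiffOn hψ.contDiffOn (fun q hq => cross_ne_zero_of_isConfImm hφ hq) hI hII
  exact ⟨A, hA, hdet, b, fun p hp i => by simp [hb p hp, Matrix.mulVec, dotProduct]⟩
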